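/- Let A, B', C' be complex-valued multiplicative characters of a finite field F_q with q elements and let x, y ∈ F_q with x ≠ 1. Then Σ_{χ,λ} {Aχ choose χ}·{Aχλ choose Aχ}·{B'λ choose C'λ}·χ(x)·λ(y) = (q-1)²·ε(x)·Ā(1-x)·₂F₁(A,B';C' | y/(1-x)) - (q-1)²·Ā(-x)·C̄'(y)·(B̄'C')(1-y), where the sum runs over all pairs of multiplicative characters χ, λ of F_q. -/

import Mathlib

open Finset

noncomputable instance {F : Type*} [Field F] [Fintype F] : Fintype (MulChar F ℂ) :=
  Fintype.ofFinite _

/-- Finite-field binomial coefficient `{A choose B} = B(-1) · J(A, B̄)`,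
where `J(χ,λ) = ∑_u χ(u)·λ(1-u)` is the Jacobi sum. -/
noncomputable def binom {F : Type*} [Field F] [Fintype F] (A B : MulChar F ℂ) : ℂ :=
  B (-1) * ∑ u : F, A u * B⁻¹ (1 - u)

/-- Finite-field Gauss hypergeometric series
`₂F₁(A,B;C|x) = ε(x)·(BC)(-1)·∑_y B(y)·(B̄C)(1-y)·Ā(1-xy)`. -/
noncomputable def gauss2F1 {F : Type*} [Field F] [Fintype F]
    (A B C : MulChar F ℂ) (x : F) : ℂ :=
  (1 : MulChar F ℂ) x * (B * C) (-1) *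
    ∑ y : F, B y * (B⁻¹ * C) (1 - y) * A⁻¹ (1 - x * y)

/-- Finite-field `₃F₂` hypergeometric series. -/
noncomputable def hyper3F2 {F : Type*} [Field F] [Fintype F]
    (A₀ A₁ A₂ B₁ B₂ : MulChar F ℂ) (x : F) : ℂ :=
  ((Fintype.card F : ℂ) - 1)⁻¹ *
    ∑ χ : MulChar F ℂ,
      binom (A₀ * χ) χ * binom (A₁ * χ) (B₁ * χ) * binom (A₂ * χ) (B₂ * χ) * χ x

/-- Finite-field Appell series
`F₂(A;B,B';C,C';x,y) = ε(xy)·(BB'CC')(-1)·∑_{u,v} B(u)B'(v)(B̄C)(1-u)(B̄'C')(1-v)·Ā(1-ux-vy)`. -/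
noncomputable def appellF2 {F : Type*} [Field F] [Fintype F]
    (A B B' C C' : MulChar F ℂ) (x y : F) : ℂ :=
  (1 : MulChar F ℂ) (x * y) * (B * B' * C * C') (-1) *
    ∑ u : F, ∑ v : F,
      B u * B' v * (B⁻¹ * C) (1 - u) * (B'⁻¹ * C') (1 - v) * A⁻¹ (1 - u * x - v * y)

open scoped Classical in
/-- `δ(x) = 1` if `x = 0`, and `0` otherwise. -/
noncomputable def deltaF {F : Type*} [Field F] (x : F) : ℂ :=
  if x = 0 then 1 else 0

open scoped Classical in
/-- `δ(χ) = 1` if `χ = ε` (the trivial character), and `0` otherwise. -/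
noncomputable def deltaChar {F : Type*} [Field F] [Fintype F] (χ : MulChar F ℂ) : ℂ :=
  if χ = 1 then 1 else 0

/-! Expanding a binomial coefficient as a Jacobi sum and summing over the characters by
orthogonality gives `∑_λ {Dλ choose Eλ} λ(t) = (q-1) Ē(t) (D̄E)(1-t)`. This evaluates the
χ-sum (expand `{Aχλ choose Aχ}` over `v`, then apply it with `D = A`, `E = ε`) and then the
λ-sum, leaving one sum over `v`. The term `v = 1`, which the χ-sum lacks because `Ā(1-v)`
vanishes there, produces the second term; the substitution `w = 1/(vy)` turns the full sum over
`v` into the `₂F₁`. -/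

namespace MulChar

variable {F R : Type*} [Field F] [CommGroupWithZero R]

lemma apply_inv (χ : MulChar F R) (a : F) : χ a⁻¹ = (χ a)⁻¹ := by
  rw [← inv_apply', inv_apply_eq_inv']

lemma apply_neg_one_inv (χ : MulChar F R) : (χ (-1))⁻¹ = χ (-1) := by
  rw [← apply_inv, inv_neg_one]

variable [Fintype F]

instance : HasEnoughRootsOfUnity ℂ (Monoid.exponent Fˣ) :=
  have : NeZero (Monoid.exponent Fˣ) :=
    ⟨Monoid.exponent_ne_zero.mpr Monoid.ExponentExists.of_finite⟩
  inferInstance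

lemma sum_characters_eq [DecidableEq F] (t : F) :
    ∑ χ : MulChar F ℂ, χ t = if t = 1 then (Fintype.card F : ℂ) - 1 else 0 := by
  split_ifs with ht
  · have hcard := card_eq_card_units_of_hasEnoughRootsOfUnity F ℂ
    rw [Nat.card_eq_fintype_card, Nat.card_eq_fintype_card, Fintype.card_units] at hcard
    simp [ht, hcard, Nat.cast_sub Fintype.card_pos]
  · obtain ⟨χ, hχ⟩ := exists_apply_ne_one_of_hasEnoughRootsOfUnity F ℂ ht
    refine eq_zero_of_mul_eq_self_left hχ ?_
    simp only [Finset.mul_sum, ← mul_apply]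
    exact Fintype.sum_bijective _ (Group.mulLeft_bijective χ) _ _ fun _ ↦ rfl

end MulChar

section

open MulChar

variable {F : Type*} [Field F]

lemma neg_mul_mul_inv_mul_eq_one_iff {u t : F} (ht0 : t ≠ 0) :
    -1 * u * (1 - u)⁻¹ * t = 1 ↔ u * (1 - t) = 1 := by
  rcases eq_or_ne u 1 with rfl | hu1
  · simpa using ht0
  have h1u : 1 - u ≠ 0 := sub_ne_zero.mpr (Ne.symm hu1)
  rw [← sub_eq_zero, ← sub_eq_zero (b := (1 : F))]
  field_simp
  constructor <;> intro h <;> linear_combination h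

variable [Fintype F]

lemma binom_mul_mul_apply (D E χ : MulChar F ℂ) (t : F) :
    binom (D * χ) (E * χ) * χ t =
      ∑ u : F, E (-1) * D u * E⁻¹ (1 - u) * χ (-1 * u * (1 - u)⁻¹ * t) := by
  simp only [binom, Finset.mul_sum, Finset.sum_mul, mul_apply, inv_apply', map_mul]
  exact Finset.sum_congr rfl fun u _ => by ring

lemma sum_binom_mul_apply (D E : MulChar F ℂ) (t : F) :
    ∑ χ : MulChar F ℂ, binom (D * χ) (E * χ) * χ t =
      ((Fintype.card F : ℂ) - 1) * (E⁻¹ t * (D⁻¹ * E) (1 - t)) := by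
  classical
  simp_rw [binom_mul_mul_apply]
  rw [Finset.sum_comm]
  simp_rw [← Finset.mul_sum, sum_characters_eq, mul_ite, mul_zero]
  rcases eq_or_ne t 0 with rfl | ht0
  · simp
  simp_rw [neg_mul_mul_inv_mul_eq_one_iff ht0]
  rcases eq_or_ne t 1 with rfl | ht1
  · simp
  have h1t : 1 - t ≠ 0 := sub_ne_zero.mpr (Ne.symm ht1)
  simp_rw [mul_eq_one_iff_eq_inv₀ h1t, Finset.sum_ite_eq', Finset.mem_univ, if_true]
  rw [show 1 - (1 - t)⁻¹ = -1 * t * (1 - t)⁻¹ by field_simp; ring]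
  simp only [mul_apply, inv_apply_eq_inv', apply_inv, map_mul]
  field_simp [apply_ne_zero_iff.mpr isUnit_one.neg]

lemma sum_binom_mul_binom_mul_apply (A lam : MulChar F ℂ) {x : F} (hx : x ≠ 0) :
    ∑ χ : MulChar F ℂ, binom (A * χ) χ * binom (A * χ * lam) (A * χ) * χ x =
      ((Fintype.card F : ℂ) - 1) * A (-1) *
        (∑ v : F, A v * A⁻¹ (1 - (1 - x) * v) * lam v - A⁻¹ x) := by
  classical
  have hsummand (v : F) : A (-1) * (A * lam) v * A⁻¹ (1 - v) *
      ((1 : MulChar F ℂ)⁻¹ (-1 * v * (1 - v)⁻¹ * x) *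
        (A⁻¹ * 1) (1 - -1 * v * (1 - v)⁻¹ * x)) =
      A (-1) * (A v * A⁻¹ (1 - (1 - x) * v) * lam v - if v = 1 then A⁻¹ x else 0) := by
    rcases eq_or_ne v 1 with rfl | hv1
    · simp
    rcases eq_or_ne v 0 with rfl | hv0
    · simp
    have h1v : 1 - v ≠ 0 := sub_ne_zero.mpr (Ne.symm hv1)
    have hs : -1 * v * (1 - v)⁻¹ * x ≠ 0 := by simp [hv0, h1v, hx]
    rw [if_neg hv1, inv_one, one_apply hs.isUnit, mul_one,
      show 1 - -1 * v * (1 - v)⁻¹ * x = (1 - (1 - x) * v) * (1 - v)⁻¹ by field_simp; ring]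
    simp only [mul_apply, inv_apply_eq_inv', apply_inv, map_mul, sub_zero]
    field_simp [apply_ne_zero_iff.mpr h1v.isUnit]
  calc ∑ χ : MulChar F ℂ, binom (A * χ) χ * binom (A * χ * lam) (A * χ) * χ x
      = ∑ v : F, A (-1) * (A * lam) v * A⁻¹ (1 - v) *
          ∑ χ : MulChar F ℂ, binom (A * χ) (1 * χ) * χ (-1 * v * (1 - v)⁻¹ * x) := by
        have hregroup (χ : MulChar F ℂ) :
            binom (A * χ) χ * binom (A * χ * lam) (A * χ) * χ x =
              binom (A * χ) (1 * χ) * (binom (A * lam * χ) (A * χ) * χ x) := by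
          rw [one_mul, mul_right_comm A χ lam, mul_assoc]
        simp_rw [hregroup, binom_mul_mul_apply (A * lam) A, Finset.mul_sum]
        rw [Finset.sum_comm]
        exact Finset.sum_congr rfl fun v _ => Finset.sum_congr rfl fun χ _ => by ring
    _ = ((Fintype.card F : ℂ) - 1) * A (-1) *
        (∑ v : F, A v * A⁻¹ (1 - (1 - x) * v) * lam v - A⁻¹ x) := by
        simp_rw [sum_binom_mul_apply, mul_left_comm _ ((Fintype.card F : ℂ) - 1), hsummand,
          ← Finset.mul_sum, Finset.sum_sub_distrib, Finset.sum_ite_eq', Finset.mem_univ, if_true]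
        ring

lemma gauss2F1_eq_sum_of_ne_zero (A B C : MulChar F ℂ) {z : F} (hz : z ≠ 0) :
    gauss2F1 A B C z = ∑ w : F, A w * A⁻¹ (w - z) * C⁻¹ w * (B⁻¹ * C) (1 - w) := by
  rw [gauss2F1, one_apply hz.isUnit, one_mul, Finset.mul_sum]
  refine Fintype.sum_equiv (Equiv.inv F) _ _ fun s => ?_
  rcases eq_or_ne s 0 with rfl | hs
  · simp
  rw [Equiv.inv_apply, show s⁻¹ - z = (1 - z * s) * s⁻¹ by field_simp,
    show 1 - s⁻¹ = -1 * (1 - s) * s⁻¹ by field_simp; ring]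
  simp only [mul_apply, inv_apply_eq_inv', apply_inv, map_mul, apply_neg_one_inv, inv_inv]
  field_simp [apply_ne_zero_iff.mpr hs.isUnit]

lemma inv_apply_mul_gauss2F1_div (A B C : MulChar F ℂ) {x : F} (hx : x ≠ 1) (y : F) :
    A⁻¹ (1 - x) * gauss2F1 A B C (y / (1 - x)) =
      A (-1) * ∑ v : F,
        A v * A⁻¹ (1 - (1 - x) * v) * (C⁻¹ (v * y) * (B⁻¹ * C) (1 - v * y)) := by
  rcases eq_or_ne y 0 with rfl | hy
  · simp [gauss2F1]
  have h1x : 1 - x ≠ 0 := sub_ne_zero.mpr (Ne.symm hx)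
  rw [gauss2F1_eq_sum_of_ne_zero A B C (div_ne_zero hy h1x), Finset.mul_sum, Finset.mul_sum]
  refine (Fintype.sum_equiv (Equiv.mulRight₀ y hy) _ _ fun v => ?_).symm
  rw [Equiv.mulRight₀_apply,
    show v * y - y / (1 - x) = -1 * y * (1 - x)⁻¹ * (1 - (1 - x) * v) by field_simp; ring]
  simp only [mul_apply, inv_apply_eq_inv', apply_inv, map_mul, apply_neg_one_inv]
  field_simp [apply_ne_zero_iff.mpr hy.isUnit, apply_ne_zero_iff.mpr h1x.isUnit]

end

/-- a double-character-sum evaluation, `x ≠ 1`. -/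
theorem double_sum_eval {F : Type*} [Field F] [Fintype F]
    (A B' C' : MulChar F ℂ) (x y : F) (hx : x ≠ 1) :
    (∑ χ : MulChar F ℂ, ∑ lam : MulChar F ℂ,
        binom (A * χ) χ * binom (A * χ * lam) (A * χ) * binom (B' * lam) (C' * lam) *
          χ x * lam y) =
      ((Fintype.card F : ℂ) - 1) ^ 2 * (1 : MulChar F ℂ) x * A⁻¹ (1 - x) *
        gauss2F1 A B' C' (y / (1 - x)) -
      ((Fintype.card F : ℂ) - 1) ^ 2 * A⁻¹ (-x) * C'⁻¹ y * (B'⁻¹ * C') (1 - y) := by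
  rcases eq_or_ne x 0 with rfl | hx0
  · simp [MulChar.map_nonunit]
  have hneg : A⁻¹ (-x) = A (-1) * A⁻¹ x := by
    rw [neg_eq_neg_one_mul, map_mul, MulChar.inv_apply_eq_inv' A, MulChar.apply_neg_one_inv]
  calc _ = ∑ lam : MulChar F ℂ, binom (B' * lam) (C' * lam) * lam y *
        ∑ χ : MulChar F ℂ, binom (A * χ) χ * binom (A * χ * lam) (A * χ) * χ x := by
        rw [Finset.sum_comm]
        simp_rw [Finset.mul_sum]
        exact Finset.sum_congr rfl fun lam _ => Finset.sum_congr rfl fun χ _ => by ring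
    _ = ∑ lam : MulChar F ℂ, binom (B' * lam) (C' * lam) * lam y *
        (((Fintype.card F : ℂ) - 1) * A (-1) *
          (∑ v : F, A v * A⁻¹ (1 - (1 - x) * v) * lam v - A⁻¹ x)) := by
        simp_rw [sum_binom_mul_binom_mul_apply A (hx := hx0)]
    _ = ((Fintype.card F : ℂ) - 1) * A (-1) *
        (∑ v : F, A v * A⁻¹ (1 - (1 - x) * v) *
            ∑ lam : MulChar F ℂ, binom (B' * lam) (C' * lam) * lam (v * y) -
          A⁻¹ x * ∑ lam : MulChar F ℂ, binom (B' * lam) (C' * lam) * lam y) := by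
        simp_rw [map_mul, mul_sub, Finset.mul_sum, Finset.sum_sub_distrib]
        rw [Finset.sum_comm]
        congr 1 <;> refine Finset.sum_congr rfl fun _ _ => ?_
        · exact Finset.sum_congr rfl fun _ _ => by ring
        · ring
    _ = _ := by
        simp_rw [sum_binom_mul_apply, mul_left_comm _ ((Fintype.card F : ℂ) - 1),
          ← Finset.mul_sum, MulChar.one_apply hx0.isUnit, hneg]
        linear_combination
          (-((Fintype.card F : ℂ) - 1) ^ 2) * inv_apply_mul_gauss2F1_div A B' C' hx y
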